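/- Let A be a Büchi automaton. For all states q, q': q ≈_de q' in A if and only if q ≈_di q' in cl(A). -/
import Mathlib

set_option linter.unusedVariables false

namespace Games

/-- A game arena: a directed graph whose vertices are partitioned between
Player 0 (`owner v = false`) and Player 1 (`owner v = true`). -/
structure GameGraph (V : Type*) where
  E : V → V → Prop
  owner : V → Bool

/-- An infinite path through the game graph. -/
def IsPlay {V : Type*} (G : GameGraph V) (ρ : ℕ → V) : Prop :=
  ∀ i, G.E (ρ i) (ρ (i + 1))

/-- A property of positions holds infinitely often. -/
def InfOften (p : ℕ → Prop) : Prop := ∀ n, ∃ m, n ≤ m ∧ p m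

/-- The set of elements occurring infinitely often in a sequence. -/
def InfSet {α : Type*} (ρ : ℕ → α) : Set α := {u | InfOften fun i => ρ i = u}

/-- Game simulation (Definition 1 of the paper): the game `(G, φ)` is simulated by the
game `(G', φ')` on the extended vertex set `S × V` with initial memory content `s0`. -/
structure IsSimulation {V S : Type*} (G : GameGraph V) (φ : (ℕ → V) → Prop)
    (G' : GameGraph (S × V)) (φ' : (ℕ → S × V) → Prop) (s0 : S) : Prop where
  owner_eq : ∀ (s : S) (v : V), G'.owner (s, v) = G.owner v
  edge_lift : ∀ (s : S) (v v' : V), G.E v v' → ∃ s', G'.E (s, v) (s', v')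
  mem_unique : ∀ (s : S) (v : V) (p₁ p₂ : S × V), G'.E (s, v) p₁ → G'.E (s, v) p₂ → p₁.1 = p₂.1
  edge_proj : ∀ (s s' : S) (v v' : V), G'.E (s, v) (s', v') → G.E v v'
  win_iff : ∀ ρ : ℕ → V, IsPlay G ρ → ∀ ρ' : ℕ → S × V,
      ρ' 0 = (s0, ρ 0) → (∀ i, (ρ' i).2 = ρ i) → IsPlay G' ρ' → (φ ρ ↔ φ' ρ')

/-- A play is consistent with the (history-dependent) strategy `f` of Player 0. -/
def StratConsistent {V : Type*} (G : GameGraph V) (f : List V → V → V) (ρ : ℕ → V) : Prop :=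
  ∀ i, G.owner (ρ i) = false → ρ (i + 1) = f (List.ofFn fun j : Fin i => ρ j) (ρ i)

/-- Player 0 has a strategy from `v` forcing every resulting play to satisfy `ψ`. -/
def ForcesFrom {V : Type*} (G : GameGraph V) (ψ : (ℕ → V) → Prop) (v : V) : Prop :=
  ∃ f : List V → V → V, (∀ (h : List V) (u : V), G.owner u = false → G.E u (f h u)) ∧
    ∀ ρ : ℕ → V, ρ 0 = v → IsPlay G ρ → StratConsistent G f ρ → ψ ρ

end Games
namespace Games

/-- A (nondeterministic) Büchi automaton. -/
structure BA (Q A : Type*) where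
  init : Q
  Tr : Q → A → Q → Prop
  final : Q → Prop

/-- Büchi acceptance: some run on `α` visits final states infinitely often. -/
def BAAccept {Q A : Type*} (M : BA Q A) (α : ℕ → A) : Prop :=
  ∃ ρ : ℕ → Q, ρ 0 = M.init ∧ (∀ i, M.Tr (ρ i) (α i) (ρ (i + 1))) ∧
    InfOften fun i => M.final (ρ i)

/-- The ω-language recognized by a Büchi automaton. -/
def BALang {Q A : Type*} (M : BA Q A) : Set (ℕ → A) := {α | BAAccept M α}

/-- Duplicator's run in the delayed simulation game, determined by a strategy `τ`
(a function of the history of letters and Spoiler states), Duplicator's start state `q'`,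
Spoiler's letters `α` and Spoiler's run `ρ`. -/
def dupRun {Q A : Type*} (τ : List (A × Q) → Q) (q' : Q) (α : ℕ → A) (ρ : ℕ → Q) : ℕ → Q
  | 0 => q'
  | i + 1 => τ ((List.range (i + 1)).map fun j => (α j, ρ (j + 1)))

/-- `q'` delayed simulates `q` (written `q ⪯_de q'`): Duplicator has a winning strategy
in the delayed simulation game `G_de(q, q')`: against every legal behaviour of Spoiler,
Duplicator's answers are legal and every final state visited by Spoiler at position `i`
is answered by a final state of Duplicator at some position `j ≥ i`. -/
def DelSim {Q A : Type*} (M : BA Q A) (q q' : Q) : Prop :=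
  ∃ τ : List (A × Q) → Q, ∀ (α : ℕ → A) (ρ : ℕ → Q), ρ 0 = q →
    (∀ i, M.Tr (ρ i) (α i) (ρ (i + 1))) →
    (∀ i, M.Tr (dupRun τ q' α ρ i) (α i) (dupRun τ q' α ρ (i + 1))) ∧
    (∀ i, M.final (ρ i) → ∃ j, i ≤ j ∧ M.final (dupRun τ q' α ρ j))

/-- Delayed simulation equivalence `q ≃_de q'`. -/
def DelSimEq {Q A : Type*} (M : BA Q A) (q q' : Q) : Prop :=
  DelSim M q q' ∧ DelSim M q' q

end Games
namespace Games

/-- The history visible to Duplicator in a bisimulation game: for each round the side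
chosen by Spoiler, the letter, and the state chosen by Spoiler. -/
def bisHist {Q A : Type*} (b : ℕ → Bool) (α : ℕ → A) (s : ℕ → Q) (i : ℕ) :
    List (Bool × A × Q) :=
  (List.range (i + 1)).map fun j => (b j, α j, s j)

/-- The run built on side `side` in a bisimulation game: in round `i` Spoiler extends
the run of side `b i` by the state `s i`, and Duplicator extends the other run
according to the strategy `τ`. -/
def bisRun {Q A : Type*} (τ : List (Bool × A × Q) → Q) (side : Bool) (q : Q)
    (b : ℕ → Bool) (α : ℕ → A) (s : ℕ → Q) : ℕ → Q
  | 0 => q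
  | i + 1 => if b i = side then s i else τ (bisHist b α s i)

/-- Delayed bisimulation `q ≈_de q'`: Duplicator has a winning strategy in the game where
in each round Spoiler chooses which of the two runs to extend (by a legal transition) and
Duplicator extends the other run with the same letter; every final state at position `i`
of either run must be answered by a final state at some position `j ≥ i` of the other run. -/
def DelBisim {Q A : Type*} (M : BA Q A) (q q' : Q) : Prop :=
  ∃ τ : List (Bool × A × Q) → Q, ∀ (b : ℕ → Bool) (α : ℕ → A) (s : ℕ → Q),
    (∀ i, (b i = false → M.Tr (bisRun τ false q b α s i) (α i) (s i)) ∧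
          (b i = true → M.Tr (bisRun τ true q' b α s i) (α i) (s i))) →
    (∀ i, M.Tr (bisRun τ false q b α s i) (α i) (bisRun τ false q b α s (i + 1)) ∧
          M.Tr (bisRun τ true q' b α s i) (α i) (bisRun τ true q' b α s (i + 1))) ∧
    (∀ i, (M.final (bisRun τ false q b α s i) →
              ∃ j, i ≤ j ∧ M.final (bisRun τ true q' b α s j)) ∧
          (M.final (bisRun τ true q' b α s i) →
              ∃ j, i ≤ j ∧ M.final (bisRun τ false q b α s j)))

/-- Direct bisimulation `q ≈_di q'`: as delayed bisimulation, but the two runs must agree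
on finality at every position. -/
def DirBisim {Q A : Type*} (M : BA Q A) (q q' : Q) : Prop :=
  ∃ τ : List (Bool × A × Q) → Q, ∀ (b : ℕ → Bool) (α : ℕ → A) (s : ℕ → Q),
    (∀ i, (b i = false → M.Tr (bisRun τ false q b α s i) (α i) (s i)) ∧
          (b i = true → M.Tr (bisRun τ true q' b α s i) (α i) (s i))) →
    (∀ i, M.Tr (bisRun τ false q b α s i) (α i) (bisRun τ false q b α s (i + 1)) ∧
          M.Tr (bisRun τ true q' b α s i) (α i) (bisRun τ true q' b α s (i + 1))) ∧
    (∀ i, M.final (bisRun τ false q b α s i) ↔ M.final (bisRun τ true q' b α s i))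

/-- The final states of the closure `cl(A)`: the least set containing the final states
and every state all of whose successors are already in the set. -/
inductive ClFin {Q A : Type*} (M : BA Q A) : Q → Prop
  | base (q : Q) : M.final q → ClFin M q
  | step (q : Q) : (∀ a q', M.Tr q a q' → ClFin M q') → ClFin M q

/-- The closure `cl(A)` of a Büchi automaton. -/
def clBA {Q A : Type*} (M : BA Q A) : BA Q A where
  init := M.init
  Tr := M.Tr
  final := ClFin M

end Games
namespace Games

private lemma not_clfin {Q A : Type*} (M : BA Q A) {p : Q} (h : ¬ ClFin M p) :
    ∃ a q'', M.Tr p a q'' ∧ ¬ ClFin M q'' := by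
  by_contra hc
  push_neg at hc
  exact h (ClFin.step p hc)

private lemma clfin_run {Q A : Type*} (M : BA Q A) {p : Q} (h : ClFin M p) :
    ∀ (σ : ℕ → Q) (α : ℕ → A), σ 0 = p → (∀ k, M.Tr (σ k) (α k) (σ (k + 1))) →
      ∃ j, M.final (σ j) := by
  induction h with
  | base r hr => exact fun σ α h0 _ => ⟨0, h0 ▸ hr⟩
  | step r hr ih =>
      intro σ α h0 hrun
      obtain ⟨j, hj⟩ := ih (α 0) (σ 1) (by rw [← h0]; exact hrun 0)
        (fun k => σ (k + 1)) (fun k => α (k + 1)) rfl (fun k => hrun (k + 1))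
      exact ⟨j + 1, hj⟩

private lemma bisRun_congr {Q A : Type*} (τ : List (Bool × A × Q) → Q) (side : Bool) (r : Q)
    (b b' : ℕ → Bool) (α α' : ℕ → A) (s s' : ℕ → Q) (i : ℕ)
    (h : ∀ j, j < i → b j = b' j ∧ α j = α' j ∧ s j = s' j) :
    bisRun τ side r b α s i = bisRun τ side r b' α' s' i := by
  cases i with
  | zero => rfl
  | succ n =>
      have hh : bisHist b α s n = bisHist b' α' s' n := by
        unfold bisHist
        refine List.map_congr_left ?_
        intro j hj
        rw [List.mem_range] at hj
        obtain ⟨h1, h2, h3⟩ := h j hj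
        rw [h1, h2, h3]
      have hn := h n (Nat.lt_succ_self n)
      simp only [bisRun, hn.1, hn.2.1, hn.2.2, hh]

/-- Key step: if `τ` is a winning strategy for Duplicator in the delayed bisimulation game
and the false-side run reaches a state in `cl(A)`'s final set, so does the true-side run. -/
private lemma key_ft {Q A : Type*} (M : BA Q A) (τ : List (Bool × A × Q) → Q) (q q' : Q)
    (hτ : ∀ (b : ℕ → Bool) (α : ℕ → A) (s : ℕ → Q),
      (∀ i, (b i = false → M.Tr (bisRun τ false q b α s i) (α i) (s i)) ∧
            (b i = true → M.Tr (bisRun τ true q' b α s i) (α i) (s i))) →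
      (∀ i, M.Tr (bisRun τ false q b α s i) (α i) (bisRun τ false q b α s (i + 1)) ∧
            M.Tr (bisRun τ true q' b α s i) (α i) (bisRun τ true q' b α s (i + 1))) ∧
      (∀ i, (M.final (bisRun τ false q b α s i) →
                ∃ j, i ≤ j ∧ M.final (bisRun τ true q' b α s j)) ∧
            (M.final (bisRun τ true q' b α s i) →
                ∃ j, i ≤ j ∧ M.final (bisRun τ false q b α s j))))
    (b : ℕ → Bool) (α : ℕ → A) (s : ℕ → Q)
    (hleg : ∀ i, (b i = false → M.Tr (bisRun τ false q b α s i) (α i) (s i)) ∧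
            (b i = true → M.Tr (bisRun τ true q' b α s i) (α i) (s i)))
    (i : ℕ) (hF : ClFin M (bisRun τ false q b α s i)) :
    ClFin M (bisRun τ true q' b α s i) := by
  by_contra hG
  classical
  have hpick : ∀ p : Q, ∃ aq : A × Q, ¬ ClFin M p → M.Tr p aq.1 aq.2 ∧ ¬ ClFin M aq.2 := by
    intro p
    by_cases h : ClFin M p
    · exact ⟨(α 0, q), fun hc => absurd h hc⟩
    · obtain ⟨a, r, h1, h2⟩ := not_clfin M h
      exact ⟨(a, r), fun _ => ⟨h1, h2⟩⟩
  choose pk hpk using hpick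
  let st : ℕ → Q := fun k => Nat.rec (bisRun τ true q' b α s i) (fun _ prev => (pk prev).2) k
  have hst0 : st 0 = bisRun τ true q' b α s i := rfl
  have hstS : ∀ k, st (k + 1) = (pk (st k)).2 := fun k => rfl
  have hstN : ∀ k, ¬ ClFin M (st k) := by
    intro k
    induction k with
    | zero => exact hst0 ▸ hG
    | succ n ih => exact (hpk (st n) ih).2
  set b' : ℕ → Bool := fun j => if j < i then b j else true with hb'
  set α' : ℕ → A := fun j => if j < i then α j else (pk (st (j - i))).1 with hα'
  set s' : ℕ → Q := fun j => if j < i then s j else (pk (st (j - i))).2 with hs'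
  have hagree : ∀ j, j < i → b j = b' j ∧ α j = α' j ∧ s j = s' j := by
    intro j hj
    exact ⟨by simp [hb', hj], by simp [hα', hj], by simp [hs', hj]⟩
  have hc1 : ∀ (side : Bool) (r : Q) (j : ℕ), j ≤ i →
      bisRun τ side r b α s j = bisRun τ side r b' α' s' j := fun side r j hj =>
    bisRun_congr τ side r b b' α α' s s' j (fun m hm => hagree m (lt_of_lt_of_le hm hj))
  have hc2 : ∀ k, bisRun τ true q' b' α' s' (i + k) = st k := by
    intro k
    induction k with
    | zero => exact (hc1 true q' i le_rfl).symm
    | succ k ih =>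
        show bisRun τ true q' b' α' s' ((i + k) + 1) = st (k + 1)
        have hbt : b' (i + k) = true := by
          simp only [hb', if_neg (by omega : ¬ (i + k < i))]
        have hsv : s' (i + k) = (pk (st k)).2 := by
          simp only [hs', if_neg (by omega : ¬ (i + k < i)), Nat.add_sub_cancel_left]
        simp [bisRun, hbt, hsv, hstS]
  have hleg' : ∀ j, (b' j = false → M.Tr (bisRun τ false q b' α' s' j) (α' j) (s' j)) ∧
      (b' j = true → M.Tr (bisRun τ true q' b' α' s' j) (α' j) (s' j)) := by
    intro j
    by_cases hj : j < i
    · obtain ⟨h1, h2, h3⟩ := hagree j hj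
      constructor
      · intro hbf
        rw [← hc1 false q j hj.le, ← h2, ← h3]
        exact (hleg j).1 (h1.trans hbf)
      · intro hbt
        rw [← hc1 true q' j hj.le, ← h2, ← h3]
        exact (hleg j).2 (h1.trans hbt)
    · have hbt : b' j = true := by simp only [hb', if_neg hj]
      refine ⟨fun hbf => absurd (hbf ▸ hbt) (by simp), fun _ => ?_⟩
      have hji : j = i + (j - i) := by omega
      have hr : bisRun τ true q' b' α' s' j = st (j - i) := by
        rw [hji, Nat.add_sub_cancel_left]; exact hc2 (j - i)
      have hαv : α' j = (pk (st (j - i))).1 := by simp only [hα', if_neg hj]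
      have hsv : s' j = (pk (st (j - i))).2 := by simp only [hs', if_neg hj]
      rw [hr, hαv, hsv]
      exact (hpk (st (j - i)) (hstN (j - i))).1
  obtain ⟨htr', hwin'⟩ := hτ b' α' s' hleg'
  have hFi : ClFin M (bisRun τ false q b' α' s' i) := (hc1 false q i le_rfl) ▸ hF
  obtain ⟨j0, hj0⟩ := clfin_run M hFi (fun k => bisRun τ false q b' α' s' (i + k))
      (fun k => α' (i + k)) rfl (fun k => (htr' (i + k)).1)
  obtain ⟨k, hk1, hk2⟩ := (hwin' (i + j0)).1 hj0
  have hki : i ≤ k := le_trans (Nat.le_add_right i j0) hk1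
  have hkk : bisRun τ true q' b' α' s' k = st (k - i) := by
    have := hc2 (k - i)
    rwa [Nat.add_sub_cancel' hki] at this
  rw [hkk] at hk2
  exact hstN (k - i) (ClFin.base _ hk2)

/-- Mirror image of `key_ft`. -/
private lemma key_tf {Q A : Type*} (M : BA Q A) (τ : List (Bool × A × Q) → Q) (q q' : Q)
    (hτ : ∀ (b : ℕ → Bool) (α : ℕ → A) (s : ℕ → Q),
      (∀ i, (b i = false → M.Tr (bisRun τ false q b α s i) (α i) (s i)) ∧
            (b i = true → M.Tr (bisRun τ true q' b α s i) (α i) (s i))) →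
      (∀ i, M.Tr (bisRun τ false q b α s i) (α i) (bisRun τ false q b α s (i + 1)) ∧
            M.Tr (bisRun τ true q' b α s i) (α i) (bisRun τ true q' b α s (i + 1))) ∧
      (∀ i, (M.final (bisRun τ false q b α s i) →
                ∃ j, i ≤ j ∧ M.final (bisRun τ true q' b α s j)) ∧
            (M.final (bisRun τ true q' b α s i) →
                ∃ j, i ≤ j ∧ M.final (bisRun τ false q b α s j))))
    (b : ℕ → Bool) (α : ℕ → A) (s : ℕ → Q)
    (hleg : ∀ i, (b i = false → M.Tr (bisRun τ false q b α s i) (α i) (s i)) ∧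
            (b i = true → M.Tr (bisRun τ true q' b α s i) (α i) (s i)))
    (i : ℕ) (hF : ClFin M (bisRun τ true q' b α s i)) :
    ClFin M (bisRun τ false q b α s i) := by
  by_contra hG
  classical
  have hpick : ∀ p : Q, ∃ aq : A × Q, ¬ ClFin M p → M.Tr p aq.1 aq.2 ∧ ¬ ClFin M aq.2 := by
    intro p
    by_cases h : ClFin M p
    · exact ⟨(α 0, q), fun hc => absurd h hc⟩
    · obtain ⟨a, r, h1, h2⟩ := not_clfin M h
      exact ⟨(a, r), fun _ => ⟨h1, h2⟩⟩
  choose pk hpk using hpick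
  let st : ℕ → Q := fun k => Nat.rec (bisRun τ false q b α s i) (fun _ prev => (pk prev).2) k
  have hst0 : st 0 = bisRun τ false q b α s i := rfl
  have hstS : ∀ k, st (k + 1) = (pk (st k)).2 := fun k => rfl
  have hstN : ∀ k, ¬ ClFin M (st k) := by
    intro k
    induction k with
    | zero => exact hst0 ▸ hG
    | succ n ih => exact (hpk (st n) ih).2
  set b' : ℕ → Bool := fun j => if j < i then b j else false with hb'
  set α' : ℕ → A := fun j => if j < i then α j else (pk (st (j - i))).1 with hα'
  set s' : ℕ → Q := fun j => if j < i then s j else (pk (st (j - i))).2 with hs'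
  have hagree : ∀ j, j < i → b j = b' j ∧ α j = α' j ∧ s j = s' j := by
    intro j hj
    exact ⟨by simp [hb', hj], by simp [hα', hj], by simp [hs', hj]⟩
  have hc1 : ∀ (side : Bool) (r : Q) (j : ℕ), j ≤ i →
      bisRun τ side r b α s j = bisRun τ side r b' α' s' j := fun side r j hj =>
    bisRun_congr τ side r b b' α α' s s' j (fun m hm => hagree m (lt_of_lt_of_le hm hj))
  have hc2 : ∀ k, bisRun τ false q b' α' s' (i + k) = st k := by
    intro k
    induction k with
    | zero => exact (hc1 false q i le_rfl).symm
    | succ k ih =>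
        show bisRun τ false q b' α' s' ((i + k) + 1) = st (k + 1)
        have hbt : b' (i + k) = false := by
          simp only [hb', if_neg (by omega : ¬ (i + k < i))]
        have hsv : s' (i + k) = (pk (st k)).2 := by
          simp only [hs', if_neg (by omega : ¬ (i + k < i)), Nat.add_sub_cancel_left]
        simp [bisRun, hbt, hsv, hstS]
  have hleg' : ∀ j, (b' j = false → M.Tr (bisRun τ false q b' α' s' j) (α' j) (s' j)) ∧
      (b' j = true → M.Tr (bisRun τ true q' b' α' s' j) (α' j) (s' j)) := by
    intro j
    by_cases hj : j < i
    · obtain ⟨h1, h2, h3⟩ := hagree j hj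
      constructor
      · intro hbf
        rw [← hc1 false q j hj.le, ← h2, ← h3]
        exact (hleg j).1 (h1.trans hbf)
      · intro hbt
        rw [← hc1 true q' j hj.le, ← h2, ← h3]
        exact (hleg j).2 (h1.trans hbt)
    · have hbf : b' j = false := by simp only [hb', if_neg hj]
      refine ⟨fun _ => ?_, fun hbt => absurd (hbt ▸ hbf) (by simp)⟩
      have hji : j = i + (j - i) := by omega
      have hr : bisRun τ false q b' α' s' j = st (j - i) := by
        rw [hji, Nat.add_sub_cancel_left]; exact hc2 (j - i)
      have hαv : α' j = (pk (st (j - i))).1 := by simp only [hα', if_neg hj]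
      have hsv : s' j = (pk (st (j - i))).2 := by simp only [hs', if_neg hj]
      rw [hr, hαv, hsv]
      exact (hpk (st (j - i)) (hstN (j - i))).1
  obtain ⟨htr', hwin'⟩ := hτ b' α' s' hleg'
  have hFi : ClFin M (bisRun τ true q' b' α' s' i) := (hc1 true q' i le_rfl) ▸ hF
  obtain ⟨j0, hj0⟩ := clfin_run M hFi (fun k => bisRun τ true q' b' α' s' (i + k))
      (fun k => α' (i + k)) rfl (fun k => (htr' (i + k)).2)
  obtain ⟨k, hk1, hk2⟩ := (hwin' (i + j0)).2 hj0
  have hki : i ≤ k := le_trans (Nat.le_add_right i j0) hk1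
  have hkk : bisRun τ false q b' α' s' k = st (k - i) := by
    have := hc2 (k - i)
    rwa [Nat.add_sub_cancel' hki] at this
  rw [hkk] at hk2
  exact hstN (k - i) (ClFin.base _ hk2)

/-- Lemma 2 of the paper, from Etessami–Wilke–Schuller. Two states are
delayed bisimilar in `A` if and only if they are direct bisimilar in the closure `cl(A)`. -/
theorem delayed_bisim_iff_direct_bisim_closure {Q A : Type*} (M : BA Q A) (q q' : Q) :
    DelBisim M q q' ↔ DirBisim (clBA M) q q' := by
  constructor
  · rintro ⟨τ, hτ⟩
    refine ⟨τ, fun b α s hleg => ?_⟩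
    obtain ⟨htr, hwin⟩ := hτ b α s hleg
    exact ⟨htr, fun i => ⟨fun h => key_ft M τ q q' hτ b α s hleg i h,
      fun h => key_tf M τ q q' hτ b α s hleg i h⟩⟩
  · rintro ⟨τ, hτ⟩
    refine ⟨τ, fun b α s hleg => ?_⟩
    obtain ⟨htr, hiff⟩ := hτ b α s hleg
    refine ⟨htr, fun i => ⟨?_, ?_⟩⟩
    · intro hf
      have h1 : ClFin M (bisRun τ true q' b α s i) := (hiff i).mp (ClFin.base _ hf)
      obtain ⟨j, hj⟩ := clfin_run M h1 (fun k => bisRun τ true q' b α s (i + k))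
        (fun k => α (i + k)) rfl (fun k => (htr (i + k)).2)
      exact ⟨i + j, Nat.le_add_right i j, hj⟩
    · intro hf
      have h1 : ClFin M (bisRun τ false q b α s i) := (hiff i).mpr (ClFin.base _ hf)
      obtain ⟨j, hj⟩ := clfin_run M h1 (fun k => bisRun τ false q b α s (i + k))
        (fun k => α (i + k)) rfl (fun k => (htr (i + k)).1)
      exact ⟨i + j, Nat.le_add_right i j, hj⟩

end Games
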